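/- Let Π be a HEF CNF theory and O ⊆ atom(Π^{nd}) a set of atoms that is elementary for Π^{nd} and non-outbound in atom(Π^{nd}) for Π^{nd} (i.e., super-elementary for Π^{nd}). Then O is elementary for Π and non-outbound in atom(Π) for Π (i.e., super-elementary for Π). -/

import Mathlib

structure Clause where
  head : Finset ℕ
  body : Finset ℕ
deriving DecidableEq

abbrev Theory := Finset Clause

/-- interpretation I satisfies clause c -/
def satC (I : Finset ℕ) (c : Clause) : Prop :=
  (c.head ∩ I).Nonempty ∨ ¬ c.body ⊆ I

def isModel (T : Theory) (I : Finset ℕ) : Prop := ∀ c ∈ T, satC I c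

def isMinModel (T : Theory) (I : Finset ℕ) : Prop :=
  isModel T I ∧ ∀ J ⊂ I, ¬ isModel T J

def Positive (T : Theory) : Prop := ∀ c ∈ T, c.head.Nonempty

def Horn (T : Theory) : Prop := ∀ c ∈ T, c.head.card = 1

/-- atoms occurring in a theory -/
def atoms (T : Theory) : Finset ℕ := T.biUnion (fun c => c.head ∪ c.body)

/-- c_{X←} : project head on X -/
def projHeadC (c : Clause) (X : Finset ℕ) : Clause := ⟨c.head ∩ X, c.body⟩
/-- c_X : project head and body on X -/
def projC (c : Clause) (X : Finset ℕ) : Clause := ⟨c.head ∩ X, c.body ∩ X⟩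

/-- Π_{X←} -/
def projHeadT (T : Theory) (X : Finset ℕ) : Theory :=
  (T.image (fun c => projHeadC c X)).filter (fun c => c.head.Nonempty)

/-- Π_X -/
def projT (T : Theory) (X : Finset ℕ) : Theory :=
  (T.image (fun c => projC c X)).filter (fun c => c.head.Nonempty)

/-- Π^{nd} : single-head fragment -/
def nd (T : Theory) : Theory := T.filter (fun c => c.head.card = 1)

/-- the steady set of M for Π is the minimal model of Π^{nd}_{M←} -/
def isSteady (T : Theory) (M S : Finset ℕ) : Prop :=
  isMinModel (nd (projHeadT T M)) S

def simpl (T : Theory) (M S : Finset ℕ) : Theory :=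
  T.filter (fun c => c.head ∩ S = ∅ ∧ c.body ⊆ M)

/-- simplified theory of Π w.r.t. M (with steady set S) -/
def simplT (T : Theory) (M S : Finset ℕ) : Theory := projT (simpl T M S) (M \ S)

/-- E erasable in M for T -/
def Erasable (T : Theory) (M E : Finset ℕ) : Prop :=
  E.Nonempty ∧ E ⊆ M ∧ isModel T (M \ E)

def Outbound (T : Theory) (Y Z : Finset ℕ) : Prop :=
  ∃ c ∈ T, (c.head ∩ Z).Nonempty ∧ (c.body ∩ (Y \ Z)).Nonempty ∧
    c.body ∩ Z = ∅ ∧ c.head ∩ (Y \ Z) = ∅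

def Elementary (T : Theory) (Y : Finset ℕ) : Prop :=
  Y.Nonempty ∧ Y ⊆ atoms T ∧ ∀ Z, Z ⊂ Y → Z.Nonempty → Outbound T Y Z

def HEF (T : Theory) : Prop :=
  ∀ c ∈ T, ∀ E, Elementary T E → (E ∩ c.head).card ≤ 1

def DisjunctiveSet (T : Theory) (S : Finset ℕ) : Prop :=
  ∃ c ∈ T, 1 < (c.head ∩ S).card

def SuperElementary (T : Theory) (X : Finset ℕ) : Prop :=
  Elementary T X ∧ ¬ Outbound T (atoms T) X

def posForm (T : Theory) (phi : ℕ) : Theory :=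
  T.filter (fun c => c.head.Nonempty) ∪
  (T.filter (fun c => c.head = ∅)).image (fun c => ⟨{phi}, c.body⟩) ∪
  (atoms T).image (fun a => ⟨{a}, {phi}⟩)

/-!
A clause witnessing that `O` is outbound in `atoms T` has no head atom outside `O`, so its head
lies in the elementary set `O`; HEF then forces it to be single-headed. Such a clause already
witnesses that `O` is outbound for `nd T`. Elementarity passes from `nd T` to `T` by monotonicity.
-/

theorem head_subset_atoms {T : Theory} {c : Clause} (hc : c ∈ T) : c.head ⊆ atoms T :=
  fun _ ha => Finset.mem_biUnion.mpr ⟨c, hc, Finset.mem_union_left _ ha⟩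

theorem body_subset_atoms {T : Theory} {c : Clause} (hc : c ∈ T) : c.body ⊆ atoms T :=
  fun _ hb => Finset.mem_biUnion.mpr ⟨c, hc, Finset.mem_union_right _ hb⟩

theorem atoms_mono {T T' : Theory} (h : T' ⊆ T) : atoms T' ⊆ atoms T :=
  Finset.biUnion_subset_biUnion_of_subset_left _ h

theorem nd_subset (T : Theory) : nd T ⊆ T := Finset.filter_subset _ _

theorem Outbound.mono {T T' : Theory} {Y Z : Finset ℕ} (h : T' ⊆ T) :
    Outbound T' Y Z → Outbound T Y Z :=
  fun ⟨c, hc, hcZ⟩ => ⟨c, h hc, hcZ⟩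

theorem Elementary.mono {T T' : Theory} {Y : Finset ℕ} (h : T' ⊆ T) (hY : Elementary T' Y) :
    Elementary T Y :=
  ⟨hY.1, hY.2.1.trans (atoms_mono h), fun Z hZ hZne => (hY.2.2 Z hZ hZne).mono h⟩

theorem mem_nd_of_head_subset {T : Theory} {E : Finset ℕ} {c : Clause} (hHEF : HEF T)
    (hE : Elementary T E) (hc : c ∈ T) (hcE : (c.head ∩ E).Nonempty) (hsub : c.head ⊆ E) :
    c ∈ nd T := by
  have hle : c.head.card ≤ 1 := by
    simpa [Finset.inter_eq_right.mpr hsub] using hHEF c hc E hE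
  have hpos : 0 < c.head.card := Finset.card_pos.mpr (hcE.mono Finset.inter_subset_left)
  exact Finset.mem_filter.mpr ⟨hc, by omega⟩

theorem outbound_nd_of_outbound {T : Theory} {E : Finset ℕ} (hHEF : HEF T)
    (hE : Elementary T E) (h : Outbound T (atoms T) E) : Outbound (nd T) (atoms (nd T)) E := by
  obtain ⟨c, hc, hhead, hbody, hbodyE, hheadOut⟩ := h
  have hsub : c.head ⊆ E := fun a ha => by
    by_contra haE
    have : a ∈ c.head ∩ (atoms T \ E) := by
      simp [ha, haE, head_subset_atoms hc ha]
    simp [hheadOut] at this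
  have hnd : c ∈ nd T := mem_nd_of_head_subset hHEF hE hc hhead hsub
  refine ⟨c, hnd, hhead, ?_, hbodyE, ?_⟩
  · obtain ⟨b, hb⟩ := hbody
    simp only [Finset.mem_inter, Finset.mem_sdiff] at hb
    exact ⟨b, by simp [hb.1, hb.2.2, body_subset_atoms hnd hb.1]⟩
  · exact Finset.eq_empty_of_forall_notMem fun a ha =>
      (Finset.mem_sdiff.mp (Finset.mem_inter.mp ha).2).2 (hsub (Finset.mem_inter.mp ha).1)

theorem stmt9_general (T : Theory) (O : Finset ℕ) (hHEF : HEF T)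
    (hse : SuperElementary (nd T) O) :
    SuperElementary T O :=
  have hE : Elementary T O := hse.1.mono (nd_subset T)
  ⟨hE, fun h => hse.2 (outbound_nd_of_outbound hHEF hE h)⟩

theorem stmt9 (T : Theory) (O : Finset ℕ) (hHEF : HEF T)
    (hsub : O ⊆ atoms (nd T)) (hse : SuperElementary (nd T) O) :
    SuperElementary T O :=
  stmt9_general T O hHEF hse
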